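/- The equivalence relation ≡ on T is a congruence for both the monoid multiplication and Σ: if A ≡ B then Σ(A,C) ≡ Σ(B,C), Σ(C,A) ≡ Σ(C,B), AC ≡ BC, and CA ≡ CB for all C ∈ T. Moreover ≡ equals the smallest CQP congruence identifying Σ(π₁,π₂) with 1. -/
import Mathlib


/-- The free magma `T` on the free monoid `F` on π₁, π₂: finite nonempty ordered
binary trees with leaves colored by elements of `F`. -/
inductive Tm : Type
  | leaf : FreeMonoid (Fin 2) → Tm
  | node : Tm → Tm → Tm

/-- The action of the generator πᵢ on `T`: it picks out the `i`-th subtree of a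
node, and acts by left multiplication on (the color of) a single leaf. -/
def pact (i : Fin 2) : Tm → Tm
  | .leaf w => .leaf (FreeMonoid.of i * w)
  | .node A B => if i = 0 then A else B

/-- The left action of a word `w ∈ F` on `T`, applying the symbols of `w` one at
a time from right to left. -/
def wact (w : FreeMonoid (Fin 2)) (A : Tm) : Tm :=
  (FreeMonoid.toList w).foldr pact A

/-- The product on `T`: `A * B` replaces each leaf of `A` of color `w` by `w • B`. -/
def tmul : Tm → Tm → Tm
  | .leaf w, B => wact w B
  | .node A₁ A₂, B => .node (tmul A₁ B) (tmul A₂ B)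

/-- The identity of `T`: a single leaf colored by the empty word. -/
def tone : Tm := .leaf 1

/-- The list of leaves of a tree `A ∈ T`, in order, recorded as pairs
`(path, color)`: the path from the root to the leaf is described by the word
`path` read from right to left, and `color` is the color of the leaf. -/
def tleaves : Tm → List (FreeMonoid (Fin 2) × FreeMonoid (Fin 2))
  | .leaf w => [(1, w)]
  | .node A B =>
      ((tleaves A).map fun pc => (pc.1 * FreeMonoid.of 0, pc.2)) ++
        ((tleaves B).map fun pc => (pc.1 * FreeMonoid.of 1, pc.2))

/-- One expansion move on `T`: some leaf of color `w` is replaced by the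
two-leaf tree with colors `π₁ w`, `π₂ w` in order. -/
inductive Exp : Tm → Tm → Prop
  | expand (w : FreeMonoid (Fin 2)) :
      Exp (.leaf w) (.node (.leaf (FreeMonoid.of 0 * w)) (.leaf (FreeMonoid.of 1 * w)))
  | left {A A' : Tm} (B : Tm) : Exp A A' → Exp (.node A B) (.node A' B)
  | right (A : Tm) {B B' : Tm} : Exp B B' → Exp (.node A B) (.node A B')

/-- The equivalence relation `≡` on `T` generated by expansion moves. -/
def TEquiv : Tm → Tm → Prop := Relation.EqvGen Exp

/-- `A` is reduced if no retraction move applies to it, i.e. it is not the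
result of an expansion move. -/
def TReduced (A : Tm) : Prop := ∀ B : Tm, ¬ Exp B A


lemma TEquiv.lift {f : Tm → Tm} (hf : ∀ a b, Exp a b → TEquiv (f a) (f b))
    {A B : Tm} (h : TEquiv A B) : TEquiv (f A) (f B) := by
  induction h with
  | rel a b h => exact hf a b h
  | refl a => exact .refl _
  | symm a b _ ih => exact .symm _ _ ih
  | trans a b c _ _ ih1 ih2 => exact .trans _ _ _ ih1 ih2

lemma node_left (C : Tm) {A B : Tm} (h : TEquiv A B) :
    TEquiv (.node A C) (.node B C) :=
  TEquiv.lift (fun _ _ h => .rel _ _ (.left C h)) h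

lemma node_right (C : Tm) {A B : Tm} (h : TEquiv A B) :
    TEquiv (.node C A) (.node C B) :=
  TEquiv.lift (fun _ _ h => .rel _ _ (.right C h)) h

lemma node_congr {A B A' B' : Tm} (h : TEquiv A A') (h' : TEquiv B B') :
    TEquiv (.node A B) (.node A' B') :=
  .trans _ _ _ (node_left B h) (node_right A' h')

lemma exp_pact (i : Fin 2) {A B : Tm} (h : Exp A B) :
    TEquiv (pact i A) (pact i B) := by
  cases h with
  | expand w =>
      fin_cases i <;> simp [pact] <;> exact .refl _
  | left C h =>
      fin_cases i <;> simp [pact]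
      · exact .rel _ _ h
      · exact .refl _
  | right C h =>
      fin_cases i <;> simp [pact]
      · exact .refl _
      · exact .rel _ _ h

lemma pact_tequiv (i : Fin 2) {A B : Tm} (h : TEquiv A B) :
    TEquiv (pact i A) (pact i B) :=
  TEquiv.lift (fun _ _ h => exp_pact i h) h

lemma foldr_tequiv (l : List (Fin 2)) {A B : Tm} (h : TEquiv A B) :
    TEquiv (l.foldr pact A) (l.foldr pact B) := by
  induction l with
  | nil => exact h
  | cons i l ih => exact pact_tequiv i ih

lemma wact_tequiv (w : FreeMonoid (Fin 2)) {A B : Tm} (h : TEquiv A B) :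
    TEquiv (wact w A) (wact w B) := foldr_tequiv _ h

lemma tmul_right (C : Tm) {A B : Tm} (h : TEquiv A B) :
    TEquiv (tmul C A) (tmul C B) := by
  induction C with
  | leaf w => exact wact_tequiv w h
  | node C₁ C₂ ih1 ih2 => exact node_congr ih1 ih2

lemma expand_self (X : Tm) : TEquiv X (.node (pact 0 X) (pact 1 X)) := by
  cases X with
  | leaf w => exact .rel _ _ (.expand w)
  | node A B => simp [pact]; exact .refl _

lemma wact_mul_of (i : Fin 2) (w : FreeMonoid (Fin 2)) (C : Tm) :
    wact (FreeMonoid.of i * w) C = pact i (wact w C) := by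
  simp [wact, FreeMonoid.toList_mul, FreeMonoid.toList_of]

lemma tmul_left_exp (C : Tm) {A B : Tm} (h : Exp A B) :
    TEquiv (tmul A C) (tmul B C) := by
  induction h with
  | expand w =>
      show TEquiv (wact w C) (Tm.node (wact (FreeMonoid.of 0 * w) C)
        (wact (FreeMonoid.of 1 * w) C))
      rw [wact_mul_of, wact_mul_of]
      exact expand_self _
  | left B h ih => exact node_left _ ih
  | right A h ih => exact node_right _ ih

lemma tmul_left (C : Tm) {A B : Tm} (h : TEquiv A B) :
    TEquiv (tmul A C) (tmul B C) :=
  TEquiv.lift (f := fun X => tmul X C) (fun _ _ h => tmul_left_exp C h) h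

lemma tmul_tone (X : Tm) : tmul tone X = X := rfl

lemma tmul_pp (w : FreeMonoid (Fin 2)) :
    tmul (.node (.leaf (FreeMonoid.of 0)) (.leaf (FreeMonoid.of 1))) (.leaf w)
      = .node (.leaf (FreeMonoid.of 0 * w)) (.leaf (FreeMonoid.of 1 * w)) := by
  show Tm.node (wact (FreeMonoid.of 0) (.leaf w)) (wact (FreeMonoid.of 1) (.leaf w)) = _
  simp [wact, FreeMonoid.toList_of, pact]

/-- `≡` is a congruence for the tree product and for `Σ` (= `node`), it
identifies `Σ(π₁,π₂)` with `1`, and it is the smallest such congruence: any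
equivalence relation compatible with the product and `Σ` and identifying
`Σ(π₁,π₂)` with `1` contains `≡`. -/
theorem tequiv_is_smallest_cp_congruence :
    (∀ A B C : Tm, TEquiv A B → TEquiv (.node A C) (.node B C)) ∧
    (∀ A B C : Tm, TEquiv A B → TEquiv (.node C A) (.node C B)) ∧
    (∀ A B C : Tm, TEquiv A B → TEquiv (tmul A C) (tmul B C)) ∧
    (∀ A B C : Tm, TEquiv A B → TEquiv (tmul C A) (tmul C B)) ∧
    TEquiv (.node (.leaf (FreeMonoid.of 0)) (.leaf (FreeMonoid.of 1))) tone ∧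
    ∀ c : Tm → Tm → Prop, Equivalence c →
      (∀ a b a' b' : Tm, c a b → c a' b' → c (tmul a a') (tmul b b')) →
      (∀ a b a' b' : Tm, c a b → c a' b' → c (.node a a') (.node b b')) →
      c (.node (.leaf (FreeMonoid.of 0)) (.leaf (FreeMonoid.of 1))) tone →
      ∀ A B : Tm, TEquiv A B → c A B := by
  refine ⟨fun A B C h => node_left C h, fun A B C h => node_right C h,
    fun A B C h => tmul_left C h, fun A B C h => tmul_right C h, ?_, ?_⟩
  · have h := Relation.EqvGen.rel _ _ (Exp.expand (1 : FreeMonoid (Fin 2)))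
    simp only [mul_one] at h
    exact .symm _ _ h
  · intro c hc hmul hnode hone A B h
    have hexp : ∀ a b : Tm, Exp a b → c a b := by
      intro a b h
      induction h with
      | expand w =>
          have := hmul tone (.node (.leaf (FreeMonoid.of 0)) (.leaf (FreeMonoid.of 1)))
            (.leaf w) (.leaf w) (hc.symm hone) (hc.refl _)
          rw [tmul_tone, tmul_pp] at this
          exact this
      | left B h ih => exact hnode _ _ _ _ ih (hc.refl B)
      | right A h ih => exact hnode _ _ _ _ (hc.refl A) ih
    induction h with
    | rel a b h => exact hexp a b h
    | refl a => exact hc.refl a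
    | symm a b _ ih => exact hc.symm ih
    | trans a b d _ _ ih1 ih2 => exact hc.trans ih1 ih2
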